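/- Fix N ∈ ℕ and let u : ℝ → (ℕ → ℂ) with u(t,k) = 0 for all k > N, each t ↦ u(t,k) differentiable, satisfying the Galerkin system: for 0 ≤ k ≤ N, i·(d/dt)u(t,k) = ∑ u(t,n)·conj(u(t,j))·u(t,m), summed over (n,j,m) with 0 ≤ n,j,m ≤ N and n + m = j + k. Then the quantity ∑_{k=0}^{N} |u(t,k)|² is constant in t ∈ ℝ. -/

import Mathlib

/-!
Along a Galerkin solution,
`d/dt ∑ₖ |u(t,k)|² = 2 Re ∑ₖ conj(u(t,k)) (-i F(t,k)) = 2 Im ∑ₖ conj(u(t,k)) F(t,k)`,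
where `F` is the cubic nonlinearity. The pairing `∑ₖ conj(u(t,k)) F(t,k)` is a sum of
`conj(u k) u n conj(u j) u m` over resonant quadruples `n + m = j + k`, which is invariant under
complex conjugation, hence real; so the derivative vanishes.
-/

open scoped BigOperators

/-- The cubic nonlinearity of the Galerkin-truncated Szegő equation on the Fourier side:
for frequency `k`, the sum of `u(t,n) * conj (u(t,j)) * u(t,m)` over all triples
`(n,j,m)` with `0 ≤ n,j,m ≤ N` and `n + m = j + k`. -/
noncomputable def galerkinCubic (N : ℕ) (u : ℝ → ℕ → ℂ) (t : ℝ) (k : ℕ) : ℂ :=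
  ∑ p ∈ (Finset.range (N + 1) ×ˢ Finset.range (N + 1) ×ˢ Finset.range (N + 1)).filter
      (fun p => p.1 + p.2.2 = p.2.1 + k),
    u t p.1 * (starRingEnd ℂ) (u t p.2.1) * u t p.2.2

/-- `u : ℝ → (ℕ → ℂ)` is a solution of the `N`-th Galerkin approximation
`i ∂ₜ u_N = P_N(|u_N|² u_N)` of the cubic Szegő equation: the Fourier coefficients
vanish for `k > N`, and for `0 ≤ k ≤ N` the map `t ↦ u(t,k)` is differentiable with
`i u'(t,k) = ∑_{0 ≤ n,j,m ≤ N, n+m=j+k} u(t,n) conj(u(t,j)) u(t,m)`. -/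
def IsGalerkinSolution (N : ℕ) (u : ℝ → ℕ → ℂ) : Prop :=
  (∀ t : ℝ, ∀ k : ℕ, N < k → u t k = 0) ∧
  ∀ t : ℝ, ∀ k : ℕ, k ≤ N →
    HasDerivAt (fun s : ℝ => u s k) (-Complex.I * galerkinCubic N u t k) t

open Finset ComplexConjugate

def resonantQuadruples (s : Finset ℕ) : Finset (ℕ × ℕ × ℕ × ℕ) :=
  (s ×ˢ s ×ˢ s ×ˢ s).filter fun q => q.2.1 + q.2.2.2 = q.2.2.1 + q.1

/-- The swap `(k, n, j, m) ↦ (n, k, m, j)` preserves resonance and conjugates each term. -/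
theorem conj_sum_resonantQuadruples (s : Finset ℕ) (v : ℕ → ℂ) :
    conj (∑ q ∈ resonantQuadruples s, conj (v q.1) * v q.2.1 * conj (v q.2.2.1) * v q.2.2.2)
      = ∑ q ∈ resonantQuadruples s, conj (v q.1) * v q.2.1 * conj (v q.2.2.1) * v q.2.2.2 := by
  have hswap : ∀ q ∈ resonantQuadruples s,
      (q.2.1, q.1, q.2.2.2, q.2.2.1) ∈ resonantQuadruples s := by
    rintro ⟨k, n, j, m⟩ hq
    simp only [resonantQuadruples, mem_filter, mem_product] at hq ⊢
    obtain ⟨⟨hk, hn, hj, hm⟩, hres⟩ := hq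
    exact ⟨⟨hn, hk, hm, hj⟩, by omega⟩
  rw [map_sum]
  refine sum_nbij' _ _ hswap hswap (fun _ _ => rfl) (fun _ _ => rfl) fun q _ => ?_
  simp only [map_mul, Complex.conj_conj]
  ring

theorem sum_conj_mul_galerkinCubic (N : ℕ) (u : ℝ → ℕ → ℂ) (t : ℝ) :
    ∑ k ∈ range (N + 1), conj (u t k) * galerkinCubic N u t k
      = ∑ q ∈ resonantQuadruples (range (N + 1)),
          conj (u t q.1) * u t q.2.1 * conj (u t q.2.2.1) * u t q.2.2.2 := by
  simp only [galerkinCubic, resonantQuadruples, mul_sum, sum_filter, sum_product, mul_ite,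
    mul_zero, mul_assoc]

theorem im_sum_conj_mul_galerkinCubic (N : ℕ) (u : ℝ → ℕ → ℂ) (t : ℝ) :
    (∑ k ∈ range (N + 1), conj (u t k) * galerkinCubic N u t k).im = 0 := by
  rw [← Complex.conj_eq_iff_im, sum_conj_mul_galerkinCubic, conj_sum_resonantQuadruples]

theorem IsGalerkinSolution.hasDerivAt_sum_norm_sq {N : ℕ} {u : ℝ → ℕ → ℂ}
    (hu : IsGalerkinSolution N u) (t : ℝ) :
    HasDerivAt (fun s => ∑ k ∈ range (N + 1), ‖u s k‖ ^ 2) 0 t := by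
  have hderiv : ∀ k ∈ range (N + 1), HasDerivAt (fun s => ‖u s k‖ ^ 2)
      (2 * (-Complex.I * (conj (u t k) * galerkinCubic N u t k)).re) t := by
    intro k hk
    convert (hu.2 t k (Nat.lt_succ_iff.mp (mem_range.mp hk))).norm_sq using 1
    rw [Complex.inner]
    ring_nf
  refine (HasDerivAt.fun_sum hderiv).congr_deriv ?_
  rw [← mul_sum, ← Complex.re_sum, ← mul_sum, neg_mul, Complex.neg_re, Complex.I_mul_re,
    im_sum_conj_mul_galerkinCubic]
  simp

/-- The `L²` norm `∑_{k=0}^{N} |u(t,k)|²` of a Galerkin solution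
is conserved in time. -/
theorem galerkin_L2_conservation (N : ℕ) (u : ℝ → ℕ → ℂ)
    (hu : IsGalerkinSolution N u) :
    ∀ t : ℝ, ∑ k ∈ Finset.range (N + 1), ‖u t k‖ ^ 2
      = ∑ k ∈ Finset.range (N + 1), ‖u 0 k‖ ^ 2 := fun t =>
  is_const_of_deriv_eq_zero (fun s => (hu.hasDerivAt_sum_norm_sq s).differentiableAt)
    (fun s => (hu.hasDerivAt_sum_norm_sq s).deriv) t 0
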